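/- arXiv:2401.16518 — 5 statements merged into one kernel-verified Lean document; each statement's English description precedes it below -/
import Mathlib

section
/- The orthogonality graph of the 24 vectors (1,0,0,0), (0,1,0,0), (0,0,1,0), (0,0,0,1), (0,1,1,0), (1,0,0,-1), (1,0,0,1), (0,1,-1,0), (1,1,1,1), (1,-1,1,-1), (1,-1,-1,1), (1,1,-1,-1), (1,-1,0,0), (1,1,0,0), (0,0,1,1), (0,0,1,-1), (-1,1,1,1), (1,1,1,-1), (1,-1,1,1), (1,1,-1,1), (1,0,1,0), (0,1,0,1), (1,0,-1,0), (0,1,0,-1) in ℝ^4 is isomorphic to the Cayley graph of the symmetric group S_4 with connection set equal to the set of elements of order 2 in S_4. -/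
/-- The 24 vectors in ℝ⁴ defining Piovesan's graph `G_p`. -/
def piovesanVecs : Fin 24 → (Fin 4 → ℝ) :=
  ![![1,0,0,0], ![0,1,0,0], ![0,0,1,0], ![0,0,0,1],
    ![0,1,1,0], ![1,0,0,-1], ![1,0,0,1], ![0,1,-1,0],
    ![1,1,1,1], ![1,-1,1,-1], ![1,-1,-1,1], ![1,1,-1,-1],
    ![1,-1,0,0], ![1,1,0,0], ![0,0,1,1], ![0,0,1,-1],
    ![-1,1,1,1], ![1,1,1,-1], ![1,-1,1,1], ![1,1,-1,1],
    ![1,0,1,0], ![0,1,0,1], ![1,0,-1,0], ![0,1,0,-1]]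

/-- The orthogonality graph of the 24 vectors: vertices are the (distinct) vectors,
indexed by `Fin 24`, adjacent iff orthogonal in ℝ⁴. -/
def Gp : SimpleGraph (Fin 24) :=
  SimpleGraph.fromRel (fun i j => dotProduct (piovesanVecs i) (piovesanVecs j) = 0)

/-- The Cayley graph of `S₄` with connection set the elements of order two. -/
def CayS4 : SimpleGraph (Equiv.Perm (Fin 4)) :=
  SimpleGraph.fromRel (fun g h => h * g⁻¹ ≠ 1 ∧ (h * g⁻¹) ^ 2 = 1)

/-!
Read as quaternions and normalised, the 24 vectors are, up to sign, the 48 units of the binary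
octahedral group `2O`, and `2O / {±1}` is the rotation group of the cube, `S₄`. For unit
quaternions, `⟪p, q⟫ = Re (p q⁻¹)`, so `p ⊥ q` iff `p q⁻¹` is purely imaginary, i.e. iff
`(p q⁻¹)² = -1`, i.e. iff the image of `p q⁻¹` in `2O / {±1}` is an involution.

Concretely, the vectors come in six orthonormal frames of four consecutive vectors, matching the
six cosets of the Klein four-group `V = {k₀, k₁, k₂, k₃}` in `S₄`: the vector `4 a + b`, the
`b`-th of the `a`-th frame, goes to `k_b σ_a` for suitable coset representatives `σ_a`, and that
this bijection turns orthogonality into the Cayley adjacency is checked over `ℤ` by computation.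
-/

namespace SimpleGraph

def fromRelIso {V W : Type*} {r : V → V → Prop} {s : W → W → Prop} (e : V ≃ W)
    (h : ∀ a b, s (e a) (e b) ↔ r a b) : fromRel r ≃g fromRel s where
  toEquiv := e
  map_rel_iff' := by simp [h, e.injective.ne_iff]

end SimpleGraph

open Equiv

def intPiovesanVecs : Fin 24 → Fin 4 → ℤ :=
  ![![1,0,0,0], ![0,1,0,0], ![0,0,1,0], ![0,0,0,1],
    ![0,1,1,0], ![1,0,0,-1], ![1,0,0,1], ![0,1,-1,0],
    ![1,1,1,1], ![1,-1,1,-1], ![1,-1,-1,1], ![1,1,-1,-1],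
    ![1,-1,0,0], ![1,1,0,0], ![0,0,1,1], ![0,0,1,-1],
    ![-1,1,1,1], ![1,1,1,-1], ![1,-1,1,1], ![1,1,-1,1],
    ![1,0,1,0], ![0,1,0,1], ![1,0,-1,0], ![0,1,0,-1]]

theorem piovesanVecs_eq_intCast (i : Fin 24) :
    piovesanVecs i = Int.castRingHom ℝ ∘ intPiovesanVecs i := by
  ext k
  fin_cases i <;> fin_cases k <;> simp [piovesanVecs, intPiovesanVecs]

theorem dotProduct_piovesanVecs_eq_zero_iff (i j : Fin 24) :
    piovesanVecs i ⬝ᵥ piovesanVecs j = 0 ↔ intPiovesanVecs i ⬝ᵥ intPiovesanVecs j = 0 := by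
  rw [piovesanVecs_eq_intCast, piovesanVecs_eq_intCast, ← RingHom.map_dotProduct,
    Int.coe_castRingHom, Int.cast_eq_zero]

def kleinFour : Fin 4 → Perm (Fin 4) :=
  ![1, swap 0 1 * swap 2 3, swap 0 2 * swap 1 3, swap 0 3 * swap 1 2]

def kleinFourCosetRep : Fin 6 → Perm (Fin 4) :=
  ![1, swap 1 2, [0, 1, 3].formPerm, [0, 2, 1, 3].formPerm, [0, 3, 1].formPerm,
    [0, 3, 2, 1].formPerm]

def piovesanPerm (i : Fin 24) : Perm (Fin 4) :=
  let ab : Fin 6 × Fin 4 := finProdFinEquiv.symm i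
  kleinFour ab.2 * kleinFourCosetRep ab.1

theorem piovesanPerm_bijective : Function.Bijective piovesanPerm :=
  (Fintype.bijective_iff_injective_and_card _).2
    ⟨by decide, by simp [Fintype.card_perm, Nat.factorial]⟩

theorem dotProduct_intPiovesanVecs_eq_zero_iff (i j : Fin 24) :
    intPiovesanVecs i ⬝ᵥ intPiovesanVecs j = 0 ↔
      piovesanPerm j * (piovesanPerm i)⁻¹ ≠ 1 ∧ (piovesanPerm j * (piovesanPerm i)⁻¹) ^ 2 = 1 := by
  revert i j
  decide

theorem Gp_iso_cayley : Nonempty (Gp ≃g CayS4) :=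
  ⟨SimpleGraph.fromRelIso (Equiv.ofBijective _ piovesanPerm_bijective) fun i j =>
    ((dotProduct_piovesanVecs_eq_zero_iff i j).trans
      (dotProduct_intPiovesanVecs_eq_zero_iff i j)).symm⟩
end

section
/- The orthogonality graph G_p of the 24 vectors listed (the rows of the 6×4 table forming six orthogonal bases of ℝ^4) has independence number α(G_p) strictly less than 6, i.e., there is no independent set of size 6 in G_p (one cannot choose 6 pairwise non-orthogonal vectors, one from each of the six bases). -/
/-- Integer version of the 24 vectors. -/
def iVecs : Fin 24 → (Fin 4 → ℤ) :=
  ![![1,0,0,0], ![0,1,0,0], ![0,0,1,0], ![0,0,0,1],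
    ![0,1,1,0], ![1,0,0,-1], ![1,0,0,1], ![0,1,-1,0],
    ![1,1,1,1], ![1,-1,1,-1], ![1,-1,-1,1], ![1,1,-1,-1],
    ![1,-1,0,0], ![1,1,0,0], ![0,0,1,1], ![0,0,1,-1],
    ![-1,1,1,1], ![1,1,1,-1], ![1,-1,1,1], ![1,1,-1,1],
    ![1,0,1,0], ![0,1,0,1], ![1,0,-1,0], ![0,1,0,-1]]

set_option maxHeartbeats 2000000 in
lemma cast_vecs : ∀ i k, piovesanVecs i k = ((iVecs i k : ℤ) : ℝ) := by
  intro i k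
  fin_cases i <;> fin_cases k <;> norm_num [piovesanVecs, iVecs]

lemma dot_cast (i j : Fin 24) :
    dotProduct (piovesanVecs i) (piovesanVecs j)
      = ((dotProduct (iVecs i) (iVecs j) : ℤ) : ℝ) := by
  rw [dotProduct, dotProduct]
  push_cast
  exact Finset.sum_congr rfl fun k _ => by rw [cast_vecs, cast_vecs]

lemma adj_iff (i j : Fin 24) :
    Gp.Adj i j ↔ i ≠ j ∧ dotProduct (iVecs i) (iVecs j) = 0 := by
  simp only [Gp, SimpleGraph.fromRel_adj]
  constructor
  · rintro ⟨hne, h | h⟩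
    · refine ⟨hne, ?_⟩
      have := h
      rw [dot_cast] at this
      exact_mod_cast this
    · refine ⟨hne, ?_⟩
      rw [dotProduct_comm]
      have := h
      rw [dot_cast] at this
      exact_mod_cast this
  · rintro ⟨hne, h⟩
    refine ⟨hne, Or.inl ?_⟩
    rw [dot_cast, h]
    norm_num

def idot (a b : Fin 24) : ℤ :=
  iVecs a 0 * iVecs b 0 + iVecs a 1 * iVecs b 1 + iVecs a 2 * iVecs b 2 + iVecs a 3 * iVecs b 3

lemma idot_eq (a b : Fin 24) : dotProduct (iVecs a) (iVecs b) = idot a b := by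
  simp [dotProduct, Fin.sum_univ_four, idot]

def vert (b : Fin 6) (r : Fin 4) : Fin 24 := ⟨4 * b.val + r.val, by omega⟩

set_option maxHeartbeats 8000000 in
lemma block_adj : ∀ a b : Fin 24, a ≠ b → (a : ℕ) / 4 = (b : ℕ) / 4 → idot a b = 0 := by
  decide

/-- Adjacency bitmasks: bit `b` of `maskRow a` is set iff `idot a b = 0`. -/
def maskRow : Fin 24 → Nat :=
  ![10535070, 5292141, 10498155, 5255319, 789225, 787926, 199350, 198009,
    12623520, 12610896, 3173280, 3184464, 715020, 382476, 701955, 358659,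
    10395840, 7164096, 7053360, 9916464, 15272970, 14027781, 11928330, 7930629]

def adjB (a b : Fin 24) : Bool := Nat.testBit (maskRow a) b.val

set_option maxHeartbeats 16000000 in
lemma mask_correct : ∀ a b : Fin 24, adjB a b = true ↔ idot a b = 0 := by
  decide

set_option maxHeartbeats 64000000 in
lemma key_lemma : ∀ c0 c1 c2 c3 c4 c5 : Fin 4, ∃ b b' : Fin 6, b ≠ b' ∧
    adjB (vert b (![c0,c1,c2,c3,c4,c5] b)) (vert b' (![c0,c1,c2,c3,c4,c5] b')) = true := by
  decide

/-- `G_p` has no independent set of size 6; that is, `α(G_p) < 6`. -/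
theorem Gp_no_indepSet_six :
    ¬ ∃ f : Fin 6 → Fin 24, Function.Injective f ∧
      ∀ i j, i ≠ j → ¬ Gp.Adj (f i) (f j) := by
  rintro ⟨f, hinj, hind⟩
  -- within each block of 4, distinct vectors are orthogonal
  have hgadj : ∀ a b : Fin 24, a ≠ b → (a : ℕ) / 4 = (b : ℕ) / 4 →
      dotProduct (iVecs a) (iVecs b) = 0 := by
    intro a b h1 h2; rw [idot_eq]; exact block_adj a b h1 h2
  -- the block map is injective on the independent set
  set g : Fin 6 → Fin 6 := fun i => ⟨(f i : ℕ) / 4, by omega⟩ with hg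
  have hginj : Function.Injective g := by
    intro i j h
    by_contra hij
    have hfne : f i ≠ f j := fun hh => hij (hinj hh)
    have hdiv : (f i : ℕ) / 4 = (f j : ℕ) / 4 := congrArg Fin.val h
    exact hind i j hij ((adj_iff _ _).2 ⟨hfne, hgadj _ _ hfne hdiv⟩)
  have hbij : Function.Bijective g := (Finite.injective_iff_bijective).1 hginj
  let e := Equiv.ofBijective g hbij
  set a : Fin 6 → Fin 24 := fun b => f (e.symm b) with haa
  have hdiv : ∀ b : Fin 6, (a b : ℕ) / 4 = b.val := by
    intro b
    have := e.apply_symm_apply b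
    exact congrArg Fin.val this
  set c : Fin 6 → Fin 4 := fun b => ⟨(a b : ℕ) % 4, Nat.mod_lt _ (by norm_num)⟩ with hc
  have hvert : ∀ b, vert b (c b) = a b := by
    intro b
    apply Fin.ext
    show 4 * b.val + (a b : ℕ) % 4 = (a b : ℕ)
    rw [← hdiv b]
    omega
  have key : ∀ c : Fin 6 → Fin 4, ∃ b b' : Fin 6, b ≠ b' ∧
      dotProduct (iVecs (vert b (c b))) (iVecs (vert b' (c b'))) = 0 := by
    intro c
    obtain ⟨b, b', h1, h2⟩ := key_lemma (c 0) (c 1) (c 2) (c 3) (c 4) (c 5)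
    have hm : ∀ b : Fin 6, ![c 0, c 1, c 2, c 3, c 4, c 5] b = c b := by
      intro b; fin_cases b <;> rfl
    rw [hm, hm] at h2
    exact ⟨b, b', h1, by rw [idot_eq]; exact (mask_correct _ _).1 h2⟩
  obtain ⟨b, b', hbb, hd⟩ := key c
  have hne : e.symm b ≠ e.symm b' := fun h => hbb (e.symm.injective h)
  apply hind (e.symm b) (e.symm b') hne
  rw [adj_iff]
  refine ⟨fun h => hne (hinj h), ?_⟩
  rw [hvert, hvert] at hd
  exact hd
end

section
/- The 24 vectors of G_p partition into six sets of four pairwise orthogonal vectors (six orthogonal bases of ℝ^4); equivalently, the orthogonality graph G_p contains six vertex-disjoint 4-cliques covering all vertices. -/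
/-! The table lists the vectors row by row, four to a row, and each row is an orthogonal basis. -/

/-- `(r, a)` is the `a`-th vector in row `r` of the table, i.e. the index `4 * r + a`. -/
def piovesanEntry : Fin 6 × Fin 4 ≃ Fin 24 := finProdFinEquiv

theorem dotProduct_piovesanVecs_same_row (r : Fin 6) {a b : Fin 4} (hab : a ≠ b) :
    piovesanVecs (piovesanEntry (r, a)) ⬝ᵥ piovesanVecs (piovesanEntry (r, b)) = 0 := by
  fin_cases r <;> fin_cases a <;> fin_cases b <;>
    first
      | exact absurd rfl hab
      | norm_num [piovesanEntry, finProdFinEquiv, piovesanVecs, dotProduct, Fin.sum_univ_four,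
        Matrix.cons_val_two, Matrix.cons_val_three]

theorem Gp_adj_same_row (r : Fin 6) {a b : Fin 4} (hab : a ≠ b) :
    Gp.Adj (piovesanEntry (r, a)) (piovesanEntry (r, b)) := by
  refine SimpleGraph.fromRel_adj _ _ _ |>.mpr ⟨?_, Or.inl (dotProduct_piovesanVecs_same_row r hab)⟩
  exact piovesanEntry.injective.ne (by simpa using hab)

theorem card_filter_piovesanEntry_symm_fst (r : Fin 6) :
    (Finset.univ.filter (fun i => (piovesanEntry.symm i).1 = r)).card = 4 := by
  revert r
  decide

/-- The vertices of `G_p` partition into six 4-cliques (six orthogonal bases of ℝ⁴). -/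
theorem Gp_partition_six_cliques :
    ∃ c : Fin 24 → Fin 6,
      (∀ i j, i ≠ j → c i = c j → Gp.Adj i j) ∧
      (∀ k : Fin 6, (Finset.univ.filter (fun i => c i = k)).card = 4) := by
  refine ⟨fun i => (piovesanEntry.symm i).1, ?_, card_filter_piovesanEntry_symm_fst⟩
  intro i j hij hrow
  obtain ⟨⟨r, a⟩, rfl⟩ := piovesanEntry.surjective i
  obtain ⟨⟨r', b⟩, rfl⟩ := piovesanEntry.surjective j
  simp only [Equiv.symm_apply_apply] at hrow
  subst hrow
  exact Gp_adj_same_row r fun hab => hij (by rw [hab])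
end

section
/- Let G be a finite graph with independence number α(G) = 2, and suppose P is a |V(G)|×3 array of orthogonal projections on ℂ^d satisfying the quantum coclique conditions: each column sums to the identity, P_{vi}P_{uj} = 0 for i ≠ j whenever u is adjacent to v, and P_{vi}P_{vj} = 0 for i ≠ j. Then a contradiction follows; i.e., no such P exists. Consequently, α_q(G) = 2 whenever α(G) = 2 and G has at least 2 vertices. -/
open Matrix

/-- `P` is a quantum coclique matrix for `G`. -/
def IsQuantumCoclique {V : Type*} [Fintype V] (G : SimpleGraph V) {d s : ℕ}
    (P : V → Fin s → Matrix (Fin d) (Fin d) ℂ) : Prop :=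
  (∀ v i, P v i * P v i = P v i ∧ (P v i)ᴴ = P v i) ∧
  (∀ i, ∑ v, P v i = 1) ∧
  (∀ u v, ∀ i j : Fin s, i ≠ j → G.Adj u v → P v i * P u j = 0) ∧
  (∀ v, ∀ i j : Fin s, i ≠ j → P v i * P v j = 0)

/-- `G` has a quantum coclique of size `s`. -/
def HasQuantumCoclique {V : Type*} [Fintype V] (G : SimpleGraph V) (s : ℕ) : Prop :=
  ∃ d : ℕ, 0 < d ∧ ∃ P : V → Fin s → Matrix (Fin d) (Fin d) ℂ, IsQuantumCoclique G P

/-- `G` has a (classical) independent set of size `k`. -/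
def HasIndepSet {V : Type*} (G : SimpleGraph V) (k : ℕ) : Prop :=
  ∃ f : Fin k → V, Function.Injective f ∧ ∀ i j, i ≠ j → ¬ G.Adj (f i) (f j)


lemma no_three_coclique {V : Type*} [Fintype V] (G : SimpleGraph V)
    (h3 : ¬ HasIndepSet G 3) (d : ℕ) (hd : 0 < d)
    (P : V → Fin 3 → Matrix (Fin d) (Fin d) ℂ)
    (hP : IsQuantumCoclique G P) : False := by
  obtain ⟨hproj, hsum, hadj, hself⟩ := hP
  have key0 : ∀ v w x : V, (P v 0 * P w 1 * P x 2).trace = 0 := by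
    intro v w x
    by_cases h1 : w = v ∨ G.Adj w v
    · have hz : P v 0 * P w 1 = 0 := by
        rcases h1 with h | h
        · subst h; exact hself w 0 1 (by decide)
        · exact hadj w v 0 1 (by decide) h
      rw [hz, zero_mul, Matrix.trace_zero]
    · push_neg at h1
      obtain ⟨hwv, hadjwv⟩ := h1
      by_cases hc2 : x = w ∨ G.Adj x w
      · have hz : P w 1 * P x 2 = 0 := by
          rcases hc2 with h | h
          · subst h; exact hself x 1 2 (by decide)
          · exact hadj x w 1 2 (by decide) h
        rw [mul_assoc, hz, mul_zero, Matrix.trace_zero]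
      · push_neg at hc2
        obtain ⟨hxw, hadjxw⟩ := hc2
        have h3' : x = v ∨ G.Adj v x := by
          by_contra hc
          push_neg at hc
          obtain ⟨hxv, hadjvx⟩ := hc
          apply h3
          refine ⟨![v, w, x], ?_, ?_⟩
          · intro i j heq
            fin_cases i <;> fin_cases j <;>
              simp only [Matrix.cons_val_zero, Matrix.cons_val_one, Matrix.head_cons,
                Matrix.cons_val_two, Matrix.tail_cons] at heq ⊢ <;>
              first
                | rfl
                | exact absurd heq.symm hwv
                | exact absurd heq.symm hxv
                | exact absurd heq.symm hxw
                | exact absurd heq hwv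
                | exact absurd heq hxv
                | exact absurd heq hxw
          · intro i j hij
            fin_cases i <;> fin_cases j <;>
              simp only [Matrix.cons_val_zero, Matrix.cons_val_one, Matrix.head_cons,
                Matrix.cons_val_two, Matrix.tail_cons] <;>
              first
                | exact absurd rfl hij
                | exact fun h => hadjwv h.symm
                | exact fun h => hadjwv h
                | exact fun h => hadjvx h
                | exact fun h => hadjvx h.symm
                | exact fun h => hadjxw h.symm
                | exact fun h => hadjxw h
        have hz : P x 2 * P v 0 = 0 := by
          rcases h3' with h | h
          · subst h; exact hself _ 2 0 (by decide)
          · exact hadj v x 2 0 (by decide) h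
        rw [Matrix.trace_mul_cycle, hz, zero_mul, Matrix.trace_zero]
  have hmain : (d : ℂ) = 0 := by
    have e1 : (1 : Matrix (Fin d) (Fin d) ℂ)
        = (∑ v, P v 0) * (∑ w, P w 1) * (∑ x, P x 2) := by
      rw [hsum 0, hsum 1, hsum 2, one_mul, one_mul]
    have e2 : (∑ v, P v 0) * (∑ w, P w 1) * (∑ x, P x 2)
        = ∑ x, ∑ w, ∑ v, P v 0 * (P w 1 * P x 2) := by
      simp only [Finset.sum_mul, Finset.mul_sum, mul_assoc]
    have ht : (1 : Matrix (Fin d) (Fin d) ℂ).trace = 0 := by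
      rw [e1, e2]
      simp only [Matrix.trace_sum, ← mul_assoc, key0, Finset.sum_const_zero]
    simpa [Matrix.trace_one] using ht
  exact absurd hmain (by exact_mod_cast hd.ne')

/-- If `α(G) = 2` then no quantum coclique matrix of size 3 exists (in any
dimension `d ≥ 1`), and consequently `α_q(G) = 2`. -/
theorem alphaQ_eq_two_of_alpha_eq_two {V : Type*} [Fintype V] (G : SimpleGraph V)
    (h2 : HasIndepSet G 2) (h3 : ¬ HasIndepSet G 3) :
    (∀ d : ℕ, 0 < d → ∀ P : V → Fin 3 → Matrix (Fin d) (Fin d) ℂ,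
      IsQuantumCoclique G P → False) ∧
    HasQuantumCoclique G 2 ∧ (∀ s, HasQuantumCoclique G s → s ≤ 2) := by
  classical
  refine ⟨fun d hd P hP => no_three_coclique G h3 d hd P hP, ?_, ?_⟩
  · obtain ⟨f, hf, hnadj⟩ := h2
    refine ⟨1, one_pos, fun v i => if v = f i then 1 else 0, ?_, ?_, ?_, ?_⟩
    · intro v i
      by_cases h : v = f i <;> simp [h]
    · intro i
      simp [Finset.sum_ite_eq']
    · intro u v i j hij huv
      by_cases hc1 : v = f i
      · by_cases hc2 : u = f j
        · exact absurd (hc1 ▸ hc2 ▸ huv.symm) (hnadj i j hij)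
        · simp [hc2]
      · simp [hc1]
    · intro v i j hij
      by_cases hc1 : v = f i
      · by_cases hc2 : v = f j
        · exact absurd (hf (hc1 ▸ hc2 ▸ rfl : f i = f j)) hij
        · simp [hc2]
      · simp [hc1]
  · intro s hs
    by_contra hlt
    push_neg at hlt
    obtain ⟨d, hd, P, hproj, hsum, hadj, hself⟩ := hs
    have hle : 3 ≤ s := hlt
    have hQ : IsQuantumCoclique G (fun v (i : Fin 3) => P v (Fin.castLE hle i)) := by
      refine ⟨fun v i => hproj v _, fun i => hsum _, ?_, ?_⟩
      · intro u v i j hij huv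
        exact hadj u v _ _ (fun h => hij (Fin.castLE_injective hle h)) huv
      · intro v i j hij
        exact hself v _ _ (fun h => hij (Fin.castLE_injective hle h))
    exact no_three_coclique G h3 d hd _ hQ
end

section
/- The orthogonality graph G_13 of the 13 column vectors (1,0,0), (0,1,0), (0,0,1), (1,1,0), (1,-1,0), (1,0,1), (1,0,-1), (0,1,1), (0,1,-1), (1,1,1), (1,1,-1), (1,-1,1), (-1,1,1) in ℝ³ has chromatic number at least 4. -/
/-- The 13 vectors in ℝ³ defining the graph `G₁₃`. -/
def g13Vecs : Fin 13 → (Fin 3 → ℝ) :=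
  ![![1,0,0], ![0,1,0], ![0,0,1], ![1,1,0], ![1,-1,0], ![1,0,1], ![1,0,-1],
    ![0,1,1], ![0,1,-1], ![1,1,1], ![1,1,-1], ![1,-1,1], ![-1,1,1]]

/-- The orthogonality graph `G₁₃`. -/
def G13 : SimpleGraph (Fin 13) :=
  SimpleGraph.fromRel (fun i j => dotProduct (g13Vecs i) (g13Vecs j) = 0)

/-! A 3-colouring gives the pairwise orthogonal basis vectors three distinct colours. The edges
{(1,1,0),(1,-1,0)}, {(1,0,1),(1,0,-1)}, {(0,1,1),(0,1,-1)} lie in `e₃^⊥`, `e₂^⊥`, `e₁^⊥`, so each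
carries the colours of the other two basis vectors, in one of two orders. In each of the 8 cases
one of the four vectors (±1,±1,±1) is orthogonal to three vectors of pairwise distinct colours,
which leaves no colour for it. -/

def g13IntVecs : Fin 13 → Fin 3 → ℤ :=
  ![![1,0,0], ![0,1,0], ![0,0,1], ![1,1,0], ![1,-1,0], ![1,0,1], ![1,0,-1],
    ![0,1,1], ![0,1,-1], ![1,1,1], ![1,1,-1], ![1,-1,1], ![-1,1,1]]

lemma g13Vecs_eq_cast (i : Fin 13) (k : Fin 3) : g13Vecs i k = g13IntVecs i k := by
  fin_cases i <;> fin_cases k <;> simp [g13Vecs, g13IntVecs]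

lemma G13_adj_iff {i j : Fin 13} :
    G13.Adj i j ↔ i ≠ j ∧ g13IntVecs i ⬝ᵥ g13IntVecs j = 0 := by
  have hdot : ∀ i j, g13Vecs i ⬝ᵥ g13Vecs j = ((g13IntVecs i ⬝ᵥ g13IntVecs j : ℤ) : ℝ) := by
    intro i j
    simp [dotProduct, g13Vecs_eq_cast]
  simp only [G13, SimpleGraph.fromRel_adj, hdot, Int.cast_eq_zero, dotProduct_comm (g13IntVecs j),
    or_self]

-- `g13Vecs` has integer entries, so adjacency can be decided by computing over `ℤ`.
instance : DecidableRel G13.Adj := fun _ _ => decidable_of_iff' _ G13_adj_iff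

theorem Fintype.eq_or_eq_or_eq_of_card_eq_three {α : Type*} [Fintype α]
    (hα : Fintype.card α = 3) {a b c : α} (hab : a ≠ b) (hac : a ≠ c) (hbc : b ≠ c) (x : α) :
    x = a ∨ x = b ∨ x = c := by
  classical
  have huniv : ({a, b, c} : Finset α) = Finset.univ :=
    Finset.eq_univ_of_card _ (hα ▸ Finset.card_eq_three.2 ⟨a, b, c, hab, hac, hbc, rfl⟩)
  have hx : x ∈ ({a, b, c} : Finset α) := huniv ▸ Finset.mem_univ x
  simpa using hx

namespace SimpleGraph.Coloring

variable {V α : Type*} [Fintype α] {G : SimpleGraph V} (C : G.Coloring α)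

theorem false_of_adj_of_pairwise_ne (hα : Fintype.card α = 3) {x p q r : V}
    (hp : G.Adj x p) (hq : G.Adj x q) (hr : G.Adj x r)
    (hpq : C p ≠ C q) (hpr : C p ≠ C r) (hqr : C q ≠ C r) : False := by
  rcases Fintype.eq_or_eq_or_eq_of_card_eq_three hα hpq hpr hqr (C x) with h | h | h
  exacts [C.valid hp h, C.valid hq h, C.valid hr h]

theorem eq_and_eq_or_eq_and_eq_of_adj (hα : Fintype.card α = 3) {u v w x y : V}
    (huv : G.Adj u v) (huw : G.Adj u w) (hvw : G.Adj v w)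
    (hxy : G.Adj x y) (hxw : G.Adj x w) (hyw : G.Adj y w) :
    C x = C u ∧ C y = C v ∨ C x = C v ∧ C y = C u := by
  have hC :=
    Fintype.eq_or_eq_or_eq_of_card_eq_three hα (C.valid huv) (C.valid huw) (C.valid hvw)
  have hx := (hC (C x)).imp_right (·.resolve_right (C.valid hxw))
  have hy := (hC (C y)).imp_right (·.resolve_right (C.valid hyw))
  have hxy := C.valid hxy
  rcases hx with hx | hx <;> rcases hy with hy | hy
  exacts [absurd (hx.trans hy.symm) hxy, .inl ⟨hx, hy⟩, .inr ⟨hx, hy⟩,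
    absurd (hx.trans hy.symm) hxy]

end SimpleGraph.Coloring

theorem G13_not_colorable_three : ¬ G13.Colorable 3 := by
  rintro ⟨C⟩
  have hα : Fintype.card (Fin 3) = 3 := Fintype.card_fin 3
  have h01 : C 0 ≠ C 1 := C.valid (by decide)
  have h02 : C 0 ≠ C 2 := C.valid (by decide)
  have h12 : C 1 ≠ C 2 := C.valid (by decide)
  have h34 := C.eq_and_eq_or_eq_and_eq_of_adj hα (u := 0) (v := 1) (w := 2) (x := 3) (y := 4)
    (by decide) (by decide) (by decide) (by decide) (by decide) (by decide)
  have h56 := C.eq_and_eq_or_eq_and_eq_of_adj hα (u := 0) (v := 2) (w := 1) (x := 5) (y := 6)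
    (by decide) (by decide) (by decide) (by decide) (by decide) (by decide)
  have h78 := C.eq_and_eq_or_eq_and_eq_of_adj hα (u := 1) (v := 2) (w := 0) (x := 7) (y := 8)
    (by decide) (by decide) (by decide) (by decide) (by decide) (by decide)
  rcases h34 with ⟨h3, h4⟩ | ⟨h3, h4⟩ <;> rcases h56 with ⟨h5, h6⟩ | ⟨h5, h6⟩ <;>
    rcases h78 with ⟨h7, h8⟩ | ⟨h7, h8⟩
  · exact C.false_of_adj_of_pairwise_ne hα (x := 11) (p := 3) (q := 6) (r := 7)
      (by decide) (by decide) (by decide)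
      (h3 ▸ h6 ▸ h02) (h3 ▸ h7 ▸ h01) (h6 ▸ h7 ▸ h12.symm)
  · exact C.false_of_adj_of_pairwise_ne hα (x := 10) (p := 4) (q := 5) (r := 7)
      (by decide) (by decide) (by decide)
      (h4 ▸ h5 ▸ h01.symm) (h4 ▸ h7 ▸ h12) (h5 ▸ h7 ▸ h02)
  · exact C.false_of_adj_of_pairwise_ne hα (x := 9) (p := 4) (q := 6) (r := 8)
      (by decide) (by decide) (by decide)
      (h4 ▸ h6 ▸ h01.symm) (h4 ▸ h8 ▸ h12) (h6 ▸ h8 ▸ h02)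
  · exact C.false_of_adj_of_pairwise_ne hα (x := 12) (p := 3) (q := 5) (r := 8)
      (by decide) (by decide) (by decide)
      (h3 ▸ h5 ▸ h02) (h3 ▸ h8 ▸ h01) (h5 ▸ h8 ▸ h12.symm)
  · exact C.false_of_adj_of_pairwise_ne hα (x := 12) (p := 3) (q := 5) (r := 8)
      (by decide) (by decide) (by decide)
      (h3 ▸ h5 ▸ h01.symm) (h3 ▸ h8 ▸ h12) (h5 ▸ h8 ▸ h02)
  · exact C.false_of_adj_of_pairwise_ne hα (x := 9) (p := 4) (q := 6) (r := 8)
      (by decide) (by decide) (by decide)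
      (h4 ▸ h6 ▸ h02) (h4 ▸ h8 ▸ h01) (h6 ▸ h8 ▸ h12.symm)
  · exact C.false_of_adj_of_pairwise_ne hα (x := 10) (p := 4) (q := 5) (r := 7)
      (by decide) (by decide) (by decide)
      (h4 ▸ h5 ▸ h02) (h4 ▸ h7 ▸ h01) (h5 ▸ h7 ▸ h12.symm)
  · exact C.false_of_adj_of_pairwise_ne hα (x := 11) (p := 3) (q := 6) (r := 7)
      (by decide) (by decide) (by decide)
      (h3 ▸ h6 ▸ h01.symm) (h3 ▸ h7 ▸ h12) (h6 ▸ h7 ▸ h02)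

/-- `G₁₃` has chromatic number at least 4. -/
theorem G13_chromaticNumber_ge_four : 4 ≤ G13.chromaticNumber :=
  SimpleGraph.le_chromaticNumber_iff_colorable.2 fun m hm => by
    by_contra! h
    exact G13_not_colorable_three (hm.mono (by exact_mod_cast Order.le_of_lt_add_one h))
end
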